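/- arXiv:hep-th/0102039 — 7 statements merged into one kernel-verified Lean document; each statement's English description precedes it below -/
import Mathlib

section
/- Let N ≥ 1 and let z_1, …, z_N be pairwise distinct elements of a field. Then the triple sum over all triples (i,j,k) of pairwise distinct indices of 1/((z_i - z_j)(z_i - z_k)) equals 0. -/
open Finset

/-- Regroup a triple sum of a function vanishing off pairwise-distinct triples
into a sum over sorted triples of the six permuted terms. -/
theorem triple_sum_regroup {M : Type*} [AddCommMonoid M] {N : ℕ}
    (G : Fin N → Fin N → Fin N → M)
    (hG : ∀ i j k, ¬(i ≠ j ∧ j ≠ k ∧ i ≠ k) → G i j k = 0) :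
    (∑ i : Fin N, ∑ j : Fin N, ∑ k : Fin N, G i j k) =
    ∑ a : Fin N, ∑ b : Fin N, ∑ c : Fin N,
      (if a < b ∧ b < c then
        G a b c + G a c b + G b a c + G b c a + G c a b + G c b a else 0) := by
  have A : ∀ H : Fin N → Fin N → Fin N → M,
      (∑ i : Fin N, ∑ j : Fin N, ∑ k : Fin N, H i j k) =
      ∑ i : Fin N, ∑ j : Fin N, ∑ k : Fin N, H j i k := fun H => Finset.sum_comm
  have B : ∀ H : Fin N → Fin N → Fin N → M,
      (∑ i : Fin N, ∑ j : Fin N, ∑ k : Fin N, H i j k) =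
      ∑ i : Fin N, ∑ j : Fin N, ∑ k : Fin N, H i k j := fun H =>
    Finset.sum_congr rfl fun i _ => Finset.sum_comm
  have R1 : ∀ H : Fin N → Fin N → Fin N → M,
      (∑ i : Fin N, ∑ j : Fin N, ∑ k : Fin N, H i j k) =
      ∑ i : Fin N, ∑ j : Fin N, ∑ k : Fin N, H j k i := fun H =>
    (B H).trans (A fun a b c => H a c b)
  have R2 : ∀ H : Fin N → Fin N → Fin N → M,
      (∑ i : Fin N, ∑ j : Fin N, ∑ k : Fin N, H i j k) =
      ∑ i : Fin N, ∑ j : Fin N, ∑ k : Fin N, H k i j := fun H =>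
    (A H).trans (B fun a b c => H b a c)
  have Rev : ∀ H : Fin N → Fin N → Fin N → M,
      (∑ i : Fin N, ∑ j : Fin N, ∑ k : Fin N, H i j k) =
      ∑ i : Fin N, ∑ j : Fin N, ∑ k : Fin N, H k j i := fun H =>
    (R1 H).trans (B fun a b c => H b c a)
  have hsplit : ∀ i j k : Fin N, G i j k =
      (if i < j ∧ j < k then G i j k else 0) +
      (if i < k ∧ k < j then G i j k else 0) +
      (if j < i ∧ i < k then G i j k else 0) +
      (if j < k ∧ k < i then G i j k else 0) +
      (if k < i ∧ i < j then G i j k else 0) +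
      (if k < j ∧ j < i then G i j k else 0) := by
    intro i j k
    split_ifs <;>
      (try simp only [add_zero, zero_add]) <;>
      first
        | rfl
        | exact hG i j k (by omega)
        | (exfalso; omega)
  calc
    (∑ i : Fin N, ∑ j : Fin N, ∑ k : Fin N, G i j k)
      = ∑ i : Fin N, ∑ j : Fin N, ∑ k : Fin N,
          ((if i < j ∧ j < k then G i j k else 0) +
          (if i < k ∧ k < j then G i j k else 0) +
          (if j < i ∧ i < k then G i j k else 0) +
          (if j < k ∧ k < i then G i j k else 0) +
          (if k < i ∧ i < j then G i j k else 0) +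
          (if k < j ∧ j < i then G i j k else 0)) :=
        Finset.sum_congr rfl fun i _ => Finset.sum_congr rfl fun j _ =>
          Finset.sum_congr rfl fun k _ => hsplit i j k
    _ = (∑ i : Fin N, ∑ j : Fin N, ∑ k : Fin N, if i < j ∧ j < k then G i j k else 0) +
        (∑ i : Fin N, ∑ j : Fin N, ∑ k : Fin N, if i < k ∧ k < j then G i j k else 0) +
        (∑ i : Fin N, ∑ j : Fin N, ∑ k : Fin N, if j < i ∧ i < k then G i j k else 0) +
        (∑ i : Fin N, ∑ j : Fin N, ∑ k : Fin N, if j < k ∧ k < i then G i j k else 0) +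
        (∑ i : Fin N, ∑ j : Fin N, ∑ k : Fin N, if k < i ∧ i < j then G i j k else 0) +
        (∑ i : Fin N, ∑ j : Fin N, ∑ k : Fin N, if k < j ∧ j < i then G i j k else 0) := by
        simp only [Finset.sum_add_distrib]
    _ = (∑ i : Fin N, ∑ j : Fin N, ∑ k : Fin N, if i < j ∧ j < k then G i j k else 0) +
        (∑ i : Fin N, ∑ j : Fin N, ∑ k : Fin N, if i < j ∧ j < k then G i k j else 0) +
        (∑ i : Fin N, ∑ j : Fin N, ∑ k : Fin N, if i < j ∧ j < k then G j i k else 0) +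
        (∑ i : Fin N, ∑ j : Fin N, ∑ k : Fin N, if i < j ∧ j < k then G k i j else 0) +
        (∑ i : Fin N, ∑ j : Fin N, ∑ k : Fin N, if i < j ∧ j < k then G j k i else 0) +
        (∑ i : Fin N, ∑ j : Fin N, ∑ k : Fin N, if i < j ∧ j < k then G k j i else 0) := by
        rw [B (fun i j k => if i < k ∧ k < j then G i j k else 0),
            A (fun i j k => if j < i ∧ i < k then G i j k else 0),
            R2 (fun i j k => if j < k ∧ k < i then G i j k else 0),
            R1 (fun i j k => if k < i ∧ i < j then G i j k else 0),
            Rev (fun i j k => if k < j ∧ j < i then G i j k else 0)]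
    _ = ∑ a : Fin N, ∑ b : Fin N, ∑ c : Fin N,
          (if a < b ∧ b < c then
            G a b c + G a c b + G b a c + G b c a + G c a b + G c b a else 0) := by
        simp only [← Finset.sum_add_distrib]
        refine Finset.sum_congr rfl fun a _ => Finset.sum_congr rfl fun b _ =>
          Finset.sum_congr rfl fun c _ => ?_
        split_ifs <;> first | abel | simp

theorem triple_sum_one_eq_zero {F : Type*} [Field F] {N : ℕ} (hN : 1 ≤ N)
    (z : Fin N → F) (hz : Function.Injective z) :
    ∑ i : Fin N, ∑ j : Fin N, ∑ k : Fin N,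
      (if i ≠ j ∧ j ≠ k ∧ i ≠ k then 1 / ((z i - z j) * (z i - z k)) else 0) = 0 := by
  rw [triple_sum_regroup (fun i j k =>
      if i ≠ j ∧ j ≠ k ∧ i ≠ k then 1 / ((z i - z j) * (z i - z k)) else 0)
      (fun i j k h => if_neg h)]
  refine Finset.sum_eq_zero fun a _ => Finset.sum_eq_zero fun b _ =>
    Finset.sum_eq_zero fun c _ => ?_
  by_cases h : a < b ∧ b < c
  swap
  · rw [if_neg h]
  rw [if_pos h]
  · obtain ⟨hab, hbc⟩ := h
    have hac : a < c := hab.trans hbc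
    have nab : a ≠ b := hab.ne
    have nbc : b ≠ c := hbc.ne
    have nac : a ≠ c := hac.ne
    have dab : z a - z b ≠ 0 := sub_ne_zero.mpr fun e => nab (hz e)
    have dbc : z b - z c ≠ 0 := sub_ne_zero.mpr fun e => nbc (hz e)
    have dac : z a - z c ≠ 0 := sub_ne_zero.mpr fun e => nac (hz e)
    have dba : z b - z a ≠ 0 := fun e => dab (by linear_combination -e)
    have dcb : z c - z b ≠ 0 := fun e => dbc (by linear_combination -e)
    have dca : z c - z a ≠ 0 := fun e => dac (by linear_combination -e)
    rw [if_pos ⟨nab, nbc, nac⟩, if_pos ⟨nac, nbc.symm, nab⟩,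
        if_pos ⟨nab.symm, nac, nbc⟩, if_pos ⟨nbc, nac.symm, nab.symm⟩,
        if_pos ⟨nac.symm, nab, nbc.symm⟩, if_pos ⟨nbc.symm, nab.symm, nac.symm⟩]
    have key : 1 / ((z a - z b) * (z a - z c)) + 1 / ((z b - z a) * (z b - z c)) +
        1 / ((z c - z a) * (z c - z b)) = 0 := by
      field_simp
      ring
    linear_combination (2 : F) * key
end

section
/- Let N ≥ 1 and let z_1, …, z_N be pairwise distinct elements of a field of characteristic zero. Then the sum over all ordered triples (i,j,k) of pairwise distinct indices of z_i^2/((z_i - z_j)(z_i - z_k)) equals N(N-1)(N-2)/3. -/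
/-!
Summing the three cyclic rotations of a summand gives
`a²/((a-b)(a-c)) + b²/((b-c)(b-a)) + c²/((c-a)(c-b)) = 1`: the left side is the leading
coefficient of the Lagrange interpolant of `x²` at the nodes `a, b, c`. Since the triple sum is
invariant under rotating its indices, three times it equals the number `N(N-1)(N-2)` of ordered
triples of distinct indices.
-/

open Finset

theorem sq_div_sub_mul_sub_add_cyclic {F : Type*} [Field F] {a b c : F}
    (hab : a ≠ b) (hbc : b ≠ c) (hac : a ≠ c) :
    a ^ 2 / ((a - b) * (a - c)) + b ^ 2 / ((b - c) * (b - a)) + c ^ 2 / ((c - a) * (c - b))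
      = 1 := by
  have := sub_ne_zero.mpr hab
  have := sub_ne_zero.mpr hbc
  have := sub_ne_zero.mpr hac
  have := sub_ne_zero.mpr hab.symm
  have := sub_ne_zero.mpr hbc.symm
  have := sub_ne_zero.mpr hac.symm
  field_simp
  ring

theorem ite_sq_div_sub_mul_sub_add_cyclic {ι F : Type*} [DecidableEq ι] [Field F] {z : ι → F}
    (hz : Function.Injective z) (i j k : ι) :
    (if i ≠ j ∧ j ≠ k ∧ i ≠ k then z i ^ 2 / ((z i - z j) * (z i - z k)) else 0)
      + (if j ≠ k ∧ k ≠ i ∧ j ≠ i then z j ^ 2 / ((z j - z k) * (z j - z i)) else 0)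
      + (if k ≠ i ∧ i ≠ j ∧ k ≠ j then z k ^ 2 / ((z k - z i) * (z k - z j)) else 0)
      = if i ≠ j ∧ j ≠ k ∧ i ≠ k then 1 else 0 := by
  by_cases h : i ≠ j ∧ j ≠ k ∧ i ≠ k
  · obtain ⟨hij, hjk, hik⟩ := h
    simp only [ne_eq, hij, hjk, hik, Ne.symm hij, Ne.symm hjk, Ne.symm hik, not_false_eq_true,
      and_self, if_true]
    exact sq_div_sub_mul_sub_add_cyclic (hz.ne hij) (hz.ne hjk) (hz.ne hik)
  · have h₂ : ¬(j ≠ k ∧ k ≠ i ∧ j ≠ i) := by tauto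
    have h₃ : ¬(k ≠ i ∧ i ≠ j ∧ k ≠ j) := by tauto
    simp only [h, h₂, h₃, if_false, add_zero]

section TripleSums

variable {ι M : Type*} [Fintype ι] [AddCommMonoid M]

theorem sum_sum_sum_rotate (f : ι → ι → ι → M) :
    ∑ i, ∑ j, ∑ k, f j k i = ∑ i, ∑ j, ∑ k, f i j k := by
  rw [Finset.sum_comm]
  exact sum_congr rfl fun _ _ => Finset.sum_comm

theorem three_nsmul_sum_sum_sum (f : ι → ι → ι → M) :
    3 • ∑ i, ∑ j, ∑ k, f i j k = ∑ i, ∑ j, ∑ k, (f i j k + f j k i + f k i j) := by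
  simp only [sum_add_distrib, sum_sum_sum_rotate f, sum_sum_sum_rotate fun i j k => f k i j]
  abel

end TripleSums

theorem sum_sum_sum_ite_pairwise_ne {ι R : Type*} [Fintype ι] [DecidableEq ι] [Ring R] :
    ∑ i : ι, ∑ j : ι, ∑ k : ι, (if i ≠ j ∧ j ≠ k ∧ i ≠ k then (1 : R) else 0)
      = (Fintype.card ι : R) * (Fintype.card ι - 1) * (Fintype.card ι - 2) := by
  have inner (i j : ι) : ∑ k : ι, (if i ≠ j ∧ j ≠ k ∧ i ≠ k then (1 : R) else 0)
      = if i ≠ j then (Fintype.card ι : R) - 2 else 0 := by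
    split_ifs with hij
    · have : univ.filter (fun k => i ≠ j ∧ j ≠ k ∧ i ≠ k) = (univ.erase i).erase j := by
        ext k
        simp [hij, ne_comm, and_comm]
      rw [sum_boole, this, cast_card_erase_of_mem (by simp [Ne.symm hij]),
        cast_card_erase_of_mem (mem_univ _), card_univ, sub_sub, one_add_one_eq_two]
    · simp [hij]
  have middle (i : ι) : ∑ j : ι, (if i ≠ j then (Fintype.card ι : R) - 2 else 0)
      = (Fintype.card ι - 1) * (Fintype.card ι - 2) := by
    rw [← sum_filter, sum_const, filter_ne, nsmul_eq_mul, cast_card_erase_of_mem (mem_univ _),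
      card_univ]
  simp only [inner, middle, sum_const, card_univ, nsmul_eq_mul, mul_assoc]

theorem triple_sum_z_sq_general {F : Type*} [Field F] [CharZero F] {N : ℕ}
    (z : Fin N → F) (hz : Function.Injective z) :
    ∑ i : Fin N, ∑ j : Fin N, ∑ k : Fin N,
      (if i ≠ j ∧ j ≠ k ∧ i ≠ k then z i ^ 2 / ((z i - z j) * (z i - z k)) else 0) =
      (N : F) * ((N : F) - 1) * ((N : F) - 2) / 3 := by
  rw [eq_div_iff three_ne_zero, mul_comm, ← Nat.cast_ofNat, ← nsmul_eq_mul,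
    three_nsmul_sum_sum_sum]
  simp only [ite_sq_div_sub_mul_sub_add_cyclic hz]
  simpa using sum_sum_sum_ite_pairwise_ne (ι := Fin N) (R := F)

theorem triple_sum_z_sq {F : Type*} [Field F] [CharZero F] {N : ℕ} (hN : 1 ≤ N)
    (z : Fin N → F) (hz : Function.Injective z) :
    ∑ i : Fin N, ∑ j : Fin N, ∑ k : Fin N,
      (if i ≠ j ∧ j ≠ k ∧ i ≠ k then z i ^ 2 / ((z i - z j) * (z i - z k)) else 0) =
      (N : F) * ((N : F) - 1) * ((N : F) - 2) / 3 :=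
  triple_sum_z_sq_general z hz
end

section
/- Let N ≥ 1 and let z_1, …, z_N be pairwise distinct elements of a field of characteristic zero. Then the sum over all ordered triples (i,j,k) of pairwise distinct indices of z_i^3/((z_i - z_j)(z_i - z_k)) equals (N-1)(N-2) · ∑_i z_i. -/
theorem triple_sum_z_cube {F : Type*} [Field F] [CharZero F] {N : ℕ} (hN : 1 ≤ N)
    (z : Fin N → F) (hz : Function.Injective z) :
    ∑ i : Fin N, ∑ j : Fin N, ∑ k : Fin N,
      (if i ≠ j ∧ j ≠ k ∧ i ≠ k then z i ^ 3 / ((z i - z j) * (z i - z k)) else 0) =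
      ((N : F) - 1) * ((N : F) - 2) * ∑ i : Fin N, z i := by
  classical
  -- generic rotation of a triple sum
  have rot : ∀ g : Fin N → Fin N → Fin N → F,
      (∑ i, ∑ j, ∑ k, g i j k) = ∑ i, ∑ j, ∑ k, g k i j := by
    intro g
    rw [Finset.sum_comm]
    refine Finset.sum_congr rfl fun j _ => ?_
    rw [Finset.sum_comm]
  have condiff : ∀ i j k : Fin N, (k ≠ i ∧ i ≠ j ∧ k ≠ j) ↔ (i ≠ j ∧ j ≠ k ∧ i ≠ k) := by
    intro i j k
    constructor
    · rintro ⟨h1, h2, h3⟩; exact ⟨h2, Ne.symm h3, Ne.symm h1⟩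
    · rintro ⟨h1, h2, h3⟩; exact ⟨Ne.symm h3, h1, Ne.symm h2⟩
  have rotite : ∀ u : Fin N → Fin N → Fin N → F,
      (∑ i, ∑ j, ∑ k, if i ≠ j ∧ j ≠ k ∧ i ≠ k then u i j k else 0)
        = ∑ i, ∑ j, ∑ k, if i ≠ j ∧ j ≠ k ∧ i ≠ k then u k i j else 0 := by
    intro u
    rw [rot (fun i j k => if i ≠ j ∧ j ≠ k ∧ i ≠ k then u i j k else 0)]
    refine Finset.sum_congr rfl fun i _ => Finset.sum_congr rfl fun j _ =>
      Finset.sum_congr rfl fun k _ => ?_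
    exact if_congr (condiff i j k) rfl rfl
  have comb : ∀ u v : Fin N → Fin N → Fin N → F,
      (∑ i, ∑ j, ∑ k, u i j k) + (∑ i, ∑ j, ∑ k, v i j k)
        = ∑ i, ∑ j, ∑ k, (u i j k + v i j k) := by
    intro u v
    rw [← Finset.sum_add_distrib]
    refine Finset.sum_congr rfl fun i _ => ?_
    rw [← Finset.sum_add_distrib]
    refine Finset.sum_congr rfl fun j _ => (Finset.sum_add_distrib).symm
  set f : Fin N → Fin N → Fin N → F :=
    fun i j k => z i ^ 3 / ((z i - z j) * (z i - z k)) with hf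
  set S : F := ∑ i, ∑ j, ∑ k, (if i ≠ j ∧ j ≠ k ∧ i ≠ k then f i j k else 0) with hS
  -- key 3-variable identity
  have key : ∀ i j k : Fin N, i ≠ j → j ≠ k → i ≠ k →
      f i j k + f k i j + f j k i = z i + z j + z k := by
    intro i j k hij hjk hik
    have h1 : z i - z j ≠ 0 := sub_ne_zero.mpr (hz.ne hij)
    have h2 : z i - z k ≠ 0 := sub_ne_zero.mpr (hz.ne hik)
    have h3 : z j - z k ≠ 0 := sub_ne_zero.mpr (hz.ne hjk)
    have h4 : z k - z i ≠ 0 := sub_ne_zero.mpr (hz.ne (Ne.symm hik))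
    have h5 : z k - z j ≠ 0 := sub_ne_zero.mpr (hz.ne (Ne.symm hjk))
    have h6 : z j - z i ≠ 0 := sub_ne_zero.mpr (hz.ne (Ne.symm hij))
    simp only [hf]
    field_simp
    ring
  -- 3 S = sum of (z i + z j + z k) over distinct triples
  have e1 : S = ∑ i, ∑ j, ∑ k, (if i ≠ j ∧ j ≠ k ∧ i ≠ k then f k i j else 0) := rotite f
  have e2 : S = ∑ i, ∑ j, ∑ k, (if i ≠ j ∧ j ≠ k ∧ i ≠ k then f j k i else 0) := by
    rw [e1, rotite (fun i j k => f k i j)]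
  have e3 : (3 : F) * S
      = ∑ i, ∑ j, ∑ k, (if i ≠ j ∧ j ≠ k ∧ i ≠ k then z i + z j + z k else 0) := by
    have step : (3 : F) * S
        = (∑ i, ∑ j, ∑ k, (if i ≠ j ∧ j ≠ k ∧ i ≠ k then f i j k else 0))
          + ((∑ i, ∑ j, ∑ k, (if i ≠ j ∧ j ≠ k ∧ i ≠ k then f k i j else 0))
          + (∑ i, ∑ j, ∑ k, (if i ≠ j ∧ j ≠ k ∧ i ≠ k then f j k i else 0))) := by
      rw [← e1, ← e2, ← hS]; ring
    rw [step, comb, comb]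
    refine Finset.sum_congr rfl fun i _ => Finset.sum_congr rfl fun j _ =>
      Finset.sum_congr rfl fun k _ => ?_
    by_cases h : i ≠ j ∧ j ≠ k ∧ i ≠ k
    · rw [if_pos h, if_pos h, if_pos h, if_pos h, ← add_assoc]
      exact key i j k h.1 h.2.1 h.2.2
    · simp [h]
  -- the z-sum splits into three equal parts
  have z1 : (∑ i, ∑ j, ∑ k, (if i ≠ j ∧ j ≠ k ∧ i ≠ k then z j else 0))
      = ∑ i, ∑ j, ∑ k, (if i ≠ j ∧ j ≠ k ∧ i ≠ k then z i else 0) := by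
    rw [rotite (fun i j k => z j)]
  have z2 : (∑ i, ∑ j, ∑ k, (if i ≠ j ∧ j ≠ k ∧ i ≠ k then z k else 0))
      = ∑ i, ∑ j, ∑ k, (if i ≠ j ∧ j ≠ k ∧ i ≠ k then z i else 0) := by
    rw [rotite (fun i j k => z k), rotite (fun i j k => z j)]
  have e4 : (3 : F) * S
      = 3 * ∑ i, ∑ j, ∑ k, (if i ≠ j ∧ j ≠ k ∧ i ≠ k then z i else 0) := by
    rw [e3]
    rw [show (∑ i, ∑ j, ∑ k, (if i ≠ j ∧ j ≠ k ∧ i ≠ k then z i + z j + z k else 0))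
        = (∑ i, ∑ j, ∑ k, (if i ≠ j ∧ j ≠ k ∧ i ≠ k then z i else 0))
          + ((∑ i, ∑ j, ∑ k, (if i ≠ j ∧ j ≠ k ∧ i ≠ k then z j else 0))
          + (∑ i, ∑ j, ∑ k, (if i ≠ j ∧ j ≠ k ∧ i ≠ k then z k else 0))) by
      rw [comb, comb]
      refine Finset.sum_congr rfl fun i _ => Finset.sum_congr rfl fun j _ =>
        Finset.sum_congr rfl fun k _ => ?_
      by_cases h : i ≠ j ∧ j ≠ k ∧ i ≠ k <;> simp [h, add_assoc]]
    rw [z1, z2]; ring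
  -- counting
  have count : ∀ i : Fin N, (∑ j, ∑ k, (if i ≠ j ∧ j ≠ k ∧ i ≠ k then (1 : F) else 0))
      = ((N : F) - 1) * ((N : F) - 2) := by
    intro i
    have inner : ∀ j : Fin N,
        (∑ k, (if i ≠ j ∧ j ≠ k ∧ i ≠ k then (1 : F) else 0))
          = if i ≠ j then (N : F) - 2 else 0 := by
      intro j
      by_cases hij : i = j
      · simp [hij]
      · have hstep : ∀ k : Fin N, (if i ≠ j ∧ j ≠ k ∧ i ≠ k then (1 : F) else 0)
            = 1 - (if k = j then (1 : F) else 0) - (if k = i then (1 : F) else 0) := by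
          intro k
          by_cases hkj : k = j
          · subst hkj
            simp [hij, Ne.symm hij]
          · by_cases hki : k = i
            · subst hki
              simp [hkj]
            · simp [hij, Ne.symm hkj, Ne.symm hki, hkj, hki]
        rw [Finset.sum_congr rfl fun k _ => hstep k]
        rw [Finset.sum_sub_distrib, Finset.sum_sub_distrib, Finset.sum_const,
          Finset.sum_ite_eq' Finset.univ j (fun _ => (1 : F)),
          Finset.sum_ite_eq' Finset.univ i (fun _ => (1 : F))]
        simp [hij]
        ring
    rw [Finset.sum_congr rfl fun j _ => inner j]
    have : ∀ j : Fin N, (if i ≠ j then (N : F) - 2 else 0)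
        = ((N : F) - 2) - (if j = i then (N : F) - 2 else 0) := by
      intro j
      by_cases hij : i = j
      · simp [hij]
      · rw [if_pos hij, if_neg (fun h : j = i => hij h.symm)]; ring
    rw [Finset.sum_congr rfl fun j _ => this j]
    rw [Finset.sum_sub_distrib, Finset.sum_const,
      Finset.sum_ite_eq' Finset.univ i (fun _ => (N : F) - 2)]
    simp
    ring
  have e5 : (∑ i, ∑ j, ∑ k, (if i ≠ j ∧ j ≠ k ∧ i ≠ k then z i else 0))
      = ((N : F) - 1) * ((N : F) - 2) * ∑ i, z i := by
    rw [Finset.mul_sum]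
    refine Finset.sum_congr rfl fun i _ => ?_
    have : ∀ j k : Fin N, (if i ≠ j ∧ j ≠ k ∧ i ≠ k then z i else 0)
        = z i * (if i ≠ j ∧ j ≠ k ∧ i ≠ k then (1 : F) else 0) := by
      intro j k
      by_cases h : i ≠ j ∧ j ≠ k ∧ i ≠ k <;> simp [h]
    simp_rw [this]
    simp_rw [← Finset.mul_sum]
    rw [count i]
    ring
  have h3 : (3 : F) ≠ 0 := by norm_num
  have := e4
  rw [e5] at this
  exact mul_left_cancel₀ h3 (by rw [this])
end

section
/- Let N ≥ 1 and let z_1, …, z_N be pairwise distinct elements of a field of characteristic zero. Then the sum over all ordered triples (i,j,k) of pairwise distinct indices of z_i^4/((z_i - z_j)(z_i - z_k)) equals (N-2) · ∑_{i<j} (z_i + z_j)^2. -/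
/-!
The summand is not symmetric, but its sum over the three cyclic rotations of `(i, j, k)` is a
polynomial: `x⁴/((x-y)(x-w)) + y⁴/((y-w)(y-x)) + w⁴/((w-x)(w-y))` is the complete homogeneous
symmetric polynomial `h₂(x, y, w) = ((x+y)² + (y+w)² + (w+x)²)/2`. Since rotating the indices does
not change a sum over all triples, twice the triple sum equals the sum of `(z i + z j)²` over
pairwise distinct triples, in which each ordered pair `i ≠ j` appears with `N - 2` choices of `k`.
-/

open Finset

section TripleSums

variable {α M : Type*} [Fintype α]

theorem sum_triple_rotate [AddCommMonoid M] (f : α → α → α → M) :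
    ∑ i, ∑ j, ∑ k, f j k i = ∑ i, ∑ j, ∑ k, f i j k := by
  rw [Finset.sum_comm]
  exact Finset.sum_congr rfl fun _ _ => Finset.sum_comm

theorem sum_triple_eq_of_cyclic_sum_eq [AddCommMonoid M] [IsAddTorsionFree M]
    {f g : α → α → α → M}
    (h : ∀ i j k, f i j k + f j k i + f k i j = g i j k + g j k i + g k i j) :
    ∑ i, ∑ j, ∑ k, f i j k = ∑ i, ∑ j, ∑ k, g i j k := by
  have three_nsmul_sum (f : α → α → α → M) :
      3 • ∑ i, ∑ j, ∑ k, f i j k = ∑ i, ∑ j, ∑ k, (f i j k + f j k i + f k i j) := by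
    simp only [sum_add_distrib]
    rw [sum_triple_rotate f, ← sum_triple_rotate fun i j k => f k i j]
    abel
  apply nsmul_right_injective three_ne_zero
  simp only [three_nsmul_sum, h]

theorem sum_pairwise_ne_triple_eq_of_cyclic_sum_eq [DecidableEq α] [AddCommMonoid M]
    [IsAddTorsionFree M] {f g : α → α → α → M}
    (h : ∀ i j k, i ≠ j → j ≠ k → i ≠ k →
      f i j k + f j k i + f k i j = g i j k + g j k i + g k i j) :
    ∑ i, ∑ j, ∑ k, (if i ≠ j ∧ j ≠ k ∧ i ≠ k then f i j k else 0) =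
      ∑ i, ∑ j, ∑ k, (if i ≠ j ∧ j ≠ k ∧ i ≠ k then g i j k else 0) := by
  refine sum_triple_eq_of_cyclic_sum_eq fun i j k => ?_
  by_cases hdup : i = j ∨ j = k ∨ i = k
  · rcases hdup with rfl | rfl | rfl <;> simp
  simp only [not_or] at hdup
  obtain ⟨hij, hjk, hik⟩ := hdup
  simp only [ne_eq, hij, hjk, hik, Ne.symm hij, Ne.symm hjk, Ne.symm hik, not_false_eq_true,
    and_self, if_true]
  exact h i j k hij hjk hik

end TripleSums

theorem cyclic_sum_pow_four_div {F : Type*} [Field F] {x y w : F}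
    (hxy : x ≠ y) (hyw : y ≠ w) (hxw : x ≠ w) :
    x ^ 4 / ((x - y) * (x - w)) + y ^ 4 / ((y - w) * (y - x)) + w ^ 4 / ((w - x) * (w - y)) =
      x ^ 2 + y ^ 2 + w ^ 2 + x * y + y * w + w * x := by
  have := sub_ne_zero.mpr hxy
  have := sub_ne_zero.mpr hyw
  have := sub_ne_zero.mpr hxw
  have := sub_ne_zero.mpr hxy.symm
  have := sub_ne_zero.mpr hyw.symm
  have := sub_ne_zero.mpr hxw.symm
  field_simp
  ring

theorem sum_ite_pairwise_ne {α R : Type*} [Fintype α] [DecidableEq α] [Ring R] (i j : α)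
    (c : R) :
    ∑ k, (if i ≠ j ∧ j ≠ k ∧ i ≠ k then c else 0) =
      if i ≠ j then ((Fintype.card α : R) - 2) * c else 0 := by
  by_cases hij : i = j
  · simp [hij]
  have hcard : #({i, j}ᶜ : Finset α) + 2 = Fintype.card α := by
    rw [card_compl, card_pair hij]
    have : 2 ≤ Fintype.card α := by
      simpa [card_pair hij] using card_le_univ ({i, j} : Finset α)
    omega
  have hfilter : ({k | j ≠ k ∧ i ≠ k} : Finset α) = {i, j}ᶜ := by
    ext k
    simp [eq_comm, and_comm]
  simp only [ne_eq, hij, not_false_eq_true, true_and, if_true]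
  rw [← sum_filter, hfilter, sum_const, nsmul_eq_mul, ← hcard, Nat.cast_add, Nat.cast_ofNat,
    add_sub_cancel_right]

theorem sum_ne_eq_two_mul_sum_lt {α R : Type*} [Fintype α] [LinearOrder α] [Semiring R]
    {h : α → α → R} (h_symm : ∀ i j, h i j = h j i) :
    ∑ i, ∑ j, (if i ≠ j then h i j else 0) = 2 * ∑ i, ∑ j, (if i < j then h i j else 0) := by
  have split (i j : α) : (if i ≠ j then h i j else 0) =
      (if i < j then h i j else 0) + (if j < i then h j i else 0) := by
    rcases lt_trichotomy i j with hlt | rfl | hgt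
    · simp [hlt, hlt.ne, hlt.not_gt]
    · simp
    · simp [hgt, hgt.ne', hgt.not_gt, h_symm i j]
  simp only [split, sum_add_distrib]
  rw [Finset.sum_comm (f := fun i j => if j < i then h j i else 0)]
  exact (two_mul _).symm

theorem triple_sum_z_fourth_general {F : Type*} [Field F] [CharZero F] {N : ℕ}
    (z : Fin N → F) (hz : Function.Injective z) :
    ∑ i : Fin N, ∑ j : Fin N, ∑ k : Fin N,
      (if i ≠ j ∧ j ≠ k ∧ i ≠ k then z i ^ 4 / ((z i - z j) * (z i - z k)) else 0) =
      ((N : F) - 2) * ∑ i : Fin N, ∑ j : Fin N,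
        (if i < j then (z i + z j) ^ 2 else 0) := by
  apply mul_left_cancel₀ (two_ne_zero (α := F))
  calc 2 * ∑ i : Fin N, ∑ j : Fin N, ∑ k : Fin N,
        (if i ≠ j ∧ j ≠ k ∧ i ≠ k then z i ^ 4 / ((z i - z j) * (z i - z k)) else 0)
      = ∑ i : Fin N, ∑ j : Fin N, ∑ k : Fin N,
          (if i ≠ j ∧ j ≠ k ∧ i ≠ k then (z i + z j) ^ 2 else 0) := by
        simp only [mul_sum, mul_ite, mul_zero]
        refine sum_pairwise_ne_triple_eq_of_cyclic_sum_eq fun i j k hij hjk hik => ?_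
        linear_combination 2 * cyclic_sum_pow_four_div (hz.ne hij) (hz.ne hjk) (hz.ne hik)
    _ = ∑ i : Fin N, ∑ j : Fin N, (if i ≠ j then ((N : F) - 2) * (z i + z j) ^ 2 else 0) := by
        simp only [sum_ite_pairwise_ne, Fintype.card_fin]
    _ = 2 * ∑ i : Fin N, ∑ j : Fin N, (if i < j then ((N : F) - 2) * (z i + z j) ^ 2 else 0) :=
        sum_ne_eq_two_mul_sum_lt fun i j => by rw [add_comm]
    _ = 2 * (((N : F) - 2) *
          ∑ i : Fin N, ∑ j : Fin N, (if i < j then (z i + z j) ^ 2 else 0)) := by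
        simp only [mul_sum, mul_ite, mul_zero]

theorem triple_sum_z_fourth {F : Type*} [Field F] [CharZero F] {N : ℕ} (hN : 1 ≤ N)
    (z : Fin N → F) (hz : Function.Injective z) :
    ∑ i : Fin N, ∑ j : Fin N, ∑ k : Fin N,
      (if i ≠ j ∧ j ≠ k ∧ i ≠ k then z i ^ 4 / ((z i - z j) * (z i - z k)) else 0) =
      ((N : F) - 2) * ∑ i : Fin N, ∑ j : Fin N,
        (if i < j then (z i + z j) ^ 2 else 0) :=
  triple_sum_z_fourth_general z hz
end

section
/- Let N ≥ 1 and let z_1, …, z_N be pairwise distinct elements of a field of characteristic zero. Then ∑_{i≠j} z_i^3/(z_i - z_j) = (N-1) · ∑_i z_i^2 + ∑_{i<j} z_i z_j. -/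
theorem pair_sum_z_cube {F : Type*} [Field F] [CharZero F] {N : ℕ} (hN : 1 ≤ N)
    (z : Fin N → F) (hz : Function.Injective z) :
    ∑ i : Fin N, ∑ j : Fin N,
      (if i ≠ j then z i ^ 3 / (z i - z j) else 0) =
      ((N : F) - 1) * (∑ i : Fin N, z i ^ 2) +
        ∑ i : Fin N, ∑ j : Fin N, (if i < j then z i * z j else 0) := by
  have hzne : ∀ i j : Fin N, i ≠ j → z i - z j ≠ 0 := fun i j h =>
    sub_ne_zero.mpr (fun e => h (hz e))
  have key : ∀ i j : Fin N, i ≠ j →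
      z i ^ 3 / (z i - z j) + z j ^ 3 / (z j - z i) =
        z i ^ 2 + z i * z j + z j ^ 2 := by
    intro i j h
    have h1 := hzne i j h
    have h2 := hzne j i h.symm
    field_simp
    ring
  -- helper: sum over j of a constant with j ≠ i removed
  have hconst : ∀ (c : F) (i : Fin N),
      (∑ j : Fin N, (if i ≠ j then c else 0)) = ((N : F) - 1) * c := by
    intro c i
    have hpt : ∀ j : Fin N, (if i ≠ j then c else 0) = c - (if i = j then c else 0) := by
      intro j; by_cases h : i = j <;> simp [h]
    simp_rw [hpt, Finset.sum_sub_distrib, Finset.sum_const, Finset.sum_ite_eq,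
      Finset.card_univ, Fintype.card_fin, Finset.mem_univ, if_true]
    ring
  have h2 : (2 : F) * (∑ i : Fin N, ∑ j : Fin N,
      (if i ≠ j then z i ^ 3 / (z i - z j) else 0)) =
      ∑ i : Fin N, ∑ j : Fin N,
        (if i ≠ j then z i ^ 2 + z i * z j + z j ^ 2 else 0) := by
    rw [two_mul]
    nth_rewrite 2 [Finset.sum_comm]
    rw [← Finset.sum_add_distrib]
    refine Finset.sum_congr rfl fun i _ => ?_
    rw [← Finset.sum_add_distrib]
    refine Finset.sum_congr rfl fun j _ => ?_
    by_cases h : i = j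
    · simp [h]
    · have h' : j ≠ i := fun e => h e.symm
      simp only [h, h', ne_eq, not_false_iff, if_true, not_true]
      exact key i j h
  have h3 : (∑ i : Fin N, ∑ j : Fin N,
      (if i ≠ j then z i ^ 2 + z i * z j + z j ^ 2 else 0)) =
      (2 : F) * (((N : F) - 1) * (∑ i : Fin N, z i ^ 2) +
        ∑ i : Fin N, ∑ j : Fin N, (if i < j then z i * z j else 0)) := by
    have split : ∀ i j : Fin N,
        (if i ≠ j then z i ^ 2 + z i * z j + z j ^ 2 else 0) =
          (if i ≠ j then z i ^ 2 else 0) + (if i ≠ j then z j ^ 2 else 0) +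
            ((if i < j then z i * z j else 0) + (if j < i then z i * z j else 0)) := by
      intro i j
      rcases lt_trichotomy i j with h | h | h
      · simp [h, h.ne, h.ne', not_lt_of_gt h]; ring
      · simp [h, lt_irrefl]
      · simp [h, h.ne, h.ne', not_lt_of_gt h]; ring
    simp_rw [split, Finset.sum_add_distrib]
    have e1 : (∑ i : Fin N, ∑ j : Fin N, (if i ≠ j then z i ^ 2 else 0)) =
        ((N : F) - 1) * ∑ i : Fin N, z i ^ 2 := by
      rw [Finset.mul_sum]
      exact Finset.sum_congr rfl fun i _ => hconst _ i
    have e2 : (∑ i : Fin N, ∑ j : Fin N, (if i ≠ j then z j ^ 2 else 0)) =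
        ((N : F) - 1) * ∑ i : Fin N, z i ^ 2 := by
      rw [Finset.sum_comm, Finset.mul_sum]
      refine Finset.sum_congr rfl fun j _ => ?_
      have : (∑ i : Fin N, (if i ≠ j then z j ^ 2 else 0)) =
          ∑ i : Fin N, (if j ≠ i then z j ^ 2 else 0) := by
        refine Finset.sum_congr rfl fun i _ => ?_
        by_cases h : i = j <;> simp [h, Ne.symm, eq_comm]
      rw [this, hconst]
    have e3 : (∑ i : Fin N, ∑ j : Fin N, (if j < i then z i * z j else 0)) =
        ∑ i : Fin N, ∑ j : Fin N, (if i < j then z i * z j else 0) := by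
      rw [Finset.sum_comm]
      refine Finset.sum_congr rfl fun i _ => Finset.sum_congr rfl fun j _ => ?_
      by_cases h : i < j <;> simp [h, mul_comm]
    rw [e1, e2, e3]
    ring
  have := h2.trans h3
  exact mul_left_cancel₀ (two_ne_zero) this
end

section
/- Fix i ≠ j in {1,…,N} and a non-negative integer n. The linear operator f ↦ (z_i z_j/(z_i - z_j)) · (f - K_{ij} f), where K_{ij} swaps variables z_i and z_j, maps the rectangular module R_n (polynomials of degree at most n in each individual variable) into itself. -/
open MvPolynomial

/-!
Modulo the ideal `(X i - X j)` the variables `X i` and `X j` coincide, so `f` and its swap agree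
there; this gives `f - K f = (X i - X j) * q`. Since `MvPolynomial` over a domain has
`degreeOf k (p * q) = degreeOf k p + degreeOf k q`, and in each variable `X i * X j` has degree at
most that of `X i - X j`, the degrees of `X i * X j * q` are bounded by those of `f - K f`, which lie
in `R_n` together with `f`.
-/

namespace MvPolynomial

variable {R σ : Type*} [CommRing R]

theorem X_sub_X_dvd_sub_rename_swap [DecidableEq σ] (i j : σ) (f : MvPolynomial σ R) :
    X i - X j ∣ f - rename (Equiv.swap i j) f := by
  let π := Ideal.Quotient.mkₐ R (Ideal.span {(X i - X j : MvPolynomial σ R)})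
  have hX : π (X i) = π (X j) := by
    rw [← sub_eq_zero, ← map_sub, Ideal.Quotient.mkₐ_eq_mk, Ideal.Quotient.eq_zero_iff_mem]
    exact Ideal.mem_span_singleton_self _
  have hπ : π.comp (rename (Equiv.swap i j)) = π := by
    refine algHom_ext fun k => ?_
    rcases eq_or_ne k i with rfl | hki
    · simp [hX]
    rcases eq_or_ne k j with rfl | hkj
    · simp [hX]
    · simp [Equiv.swap_apply_of_ne_of_ne hki hkj]
  rw [← Ideal.mem_span_singleton, ← Ideal.Quotient.eq, ← Ideal.Quotient.mkₐ_eq_mk R,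
    ← AlgHom.comp_apply, hπ]

theorem degreeOf_rename_equiv (e : σ ≃ σ) (k : σ) (f : MvPolynomial σ R) :
    degreeOf k (rename e f) = degreeOf (e.symm k) f := by
  simpa using degreeOf_rename_of_injective (p := f) e.injective (e.symm k)

theorem degreeOf_X_mul_X_le_degreeOf_X_sub_X [Nontrivial R] {i j : σ} (hij : i ≠ j) (k : σ) :
    degreeOf k (X i * X j : MvPolynomial σ R) ≤ degreeOf k (X i - X j : MvPolynomial σ R) := by
  rcases eq_or_ne k i with rfl | hki
  · rw [degreeOf_mul_X_of_ne _ hij, sub_eq_add_neg, degreeOf_add_eq_of_degreeOf_lt]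
    simp [degreeOf_X_of_ne hij]
  rcases eq_or_ne k j with rfl | hkj
  · rw [mul_comm, degreeOf_mul_X_of_ne _ hki, ← neg_sub, degreeOf_neg, sub_eq_add_neg,
      degreeOf_add_eq_of_degreeOf_lt]
    simp [degreeOf_X_of_ne hki]
  · rw [degreeOf_mul_X_of_ne _ hkj, degreeOf_X_of_ne hki]
    exact Nat.zero_le _

theorem degreeOf_X_mul_X_mul_le [IsDomain R] {i j : σ} (hij : i ≠ j) (k : σ)
    (q : MvPolynomial σ R) :
    degreeOf k (X i * X j * q) ≤ degreeOf k ((X i - X j) * q) := by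
  rcases eq_or_ne q 0 with rfl | hq
  · simp
  have hXX : (X i * X j : MvPolynomial σ R) ≠ 0 := mul_ne_zero (X_ne_zero i) (X_ne_zero j)
  have hXsubX : (X i - X j : MvPolynomial σ R) ≠ 0 := sub_ne_zero.mpr (X_injective.ne hij)
  rw [degreeOf_mul_eq hXX hq, degreeOf_mul_eq hXsubX hq]
  gcongr
  exact degreeOf_X_mul_X_le_degreeOf_X_sub_X hij k

theorem degreeOf_sub_rename_le {e : σ ≃ σ} {n : ℕ} {f : MvPolynomial σ R}
    (hf : ∀ k, degreeOf k f ≤ n) (k : σ) : degreeOf k (f - rename e f) ≤ n :=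
  (degreeOf_sub_le k _ _).trans (max_le (hf k) ((degreeOf_rename_equiv e k f).trans_le (hf _)))

end MvPolynomial

theorem Qplus_preserves_rectangular {F : Type*} [Field F] {N : ℕ}
    (i j : Fin N) (hij : i ≠ j) (n : ℕ) (f : MvPolynomial (Fin N) F)
    (hf : ∀ k, f.degreeOf k ≤ n) :
    ∃ q : MvPolynomial (Fin N) F,
      f - rename (Equiv.swap i j) f = (X i - X j) * q ∧
        ∀ k, (X i * X j * q).degreeOf k ≤ n := by
  obtain ⟨q, hq⟩ := X_sub_X_dvd_sub_rename_swap i j f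
  refine ⟨q, hq, fun k => ?_⟩
  calc degreeOf k (X i * X j * q) ≤ degreeOf k ((X i - X j) * q) :=
        degreeOf_X_mul_X_mul_le hij k q
    _ = degreeOf k (f - rename (Equiv.swap i j) f) := by rw [hq]
    _ ≤ n := degreeOf_sub_rename_le hf k
end

section
/- For each m ≥ 0 and i, the differential operator J_i^+ (without exchange terms) defined by (J_i^+ f) = z_i^2 ∂f/∂z_i − m z_i f maps the rectangular module R_m (polynomials of degree at most m in each variable) into itself, but for n ≠ m it does not map R_n into itself (for N ≥ 1). -/
/-!
Write `J_i^+ f = (X_i ∂_i f - m f) X_i`. The Euler operator `X_i ∂_i` multiplies the coefficient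
of a monomial `u` by `u_i`, so `X_i ∂_i - m` kills exactly the monomials of `X_i`-degree `m`.
On `R_m` the surviving monomials have `X_i`-degree `< m`, and the final multiplication by `X_i`
keeps them in `R_m`. For `n ≠ m`, the monomial `X_i ^ n ∈ R_n` is sent to
`(n - m) X_i ^ (n + 1)`, which is nonzero in characteristic zero and leaves `R_n`.
-/

open MvPolynomial

namespace MvPolynomial

variable {R σ : Type*}

theorem coeff_X_mul_pderiv [CommSemiring R] (i : σ) (f : MvPolynomial σ R) (u : σ →₀ ℕ) :
    coeff u (X i * pderiv i f) = u i * coeff u f := by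
  classical
  induction f using MvPolynomial.induction_on' with
  | monomial v a =>
    rw [X_mul_pderiv_monomial, coeff_smul, coeff_monomial]
    split_ifs with h
    · rw [h, nsmul_eq_mul]
    · rw [smul_zero, mul_zero]
  | add p q hp hq => rw [map_add, mul_add, coeff_add, hp, hq, coeff_add, mul_add]

variable [CommRing R]

theorem coeff_X_mul_pderiv_sub_smul (i : σ) (c : R) (f : MvPolynomial σ R) (u : σ →₀ ℕ) :
    coeff u (X i * pderiv i f - c • f) = (u i - c) * coeff u f := by
  rw [coeff_sub, coeff_smul, coeff_X_mul_pderiv, smul_eq_mul, sub_mul]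

noncomputable def jPlus (m : ℕ) (i : σ) (f : MvPolynomial σ R) : MvPolynomial σ R :=
  X i ^ 2 * pderiv i f - (m : R) • (X i * f)

theorem jPlus_eq_mul_X (m : ℕ) (i : σ) (f : MvPolynomial σ R) :
    jPlus m i f = (X i * pderiv i f - (m : R) • f) * X i := by
  rw [jPlus, smul_eq_C_mul, smul_eq_C_mul]
  ring

theorem degreeOf_jPlus_le {m : ℕ} {f : MvPolynomial σ R} (hf : ∀ k, f.degreeOf k ≤ m)
    (i k : σ) : (jPlus m i f).degreeOf k ≤ m := by
  classical
  rw [jPlus_eq_mul_X, degreeOf_le_iff, support_mul_X]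
  simp only [Finset.mem_map, addRightEmbedding_apply]
  rintro _ ⟨u, hu, rfl⟩
  have hcoeff := mem_support_iff.mp hu
  rw [coeff_X_mul_pderiv_sub_smul] at hcoeff
  have hle : ∀ k, u k ≤ m := fun k =>
    (monomial_le_degreeOf k (mem_support_iff.mpr (right_ne_zero_of_mul hcoeff))).trans (hf k)
  have hui : u i ≠ m := fun h => left_ne_zero_of_mul hcoeff (by rw [h, sub_self])
  rcases eq_or_ne k i with rfl | hk
  · rw [Finsupp.add_apply, Finsupp.single_eq_same]
    exact lt_of_le_of_ne (hle k) hui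
  · rw [Finsupp.add_apply, Finsupp.single_eq_of_ne hk, add_zero]
    exact hle k

theorem jPlus_X_pow (m n : ℕ) (i : σ) :
    jPlus m i (X i ^ n : MvPolynomial σ R) =
      monomial (Finsupp.single i (n + 1)) ((n : R) - m) := by
  rw [jPlus_eq_mul_X, X_pow_eq_monomial, X_mul_pderiv_monomial, Finsupp.single_eq_same,
    smul_monomial, smul_monomial, ← map_sub, X, monomial_mul, ← Finsupp.single_add,
    nsmul_eq_mul, smul_eq_mul, ← sub_mul, mul_one, mul_one]

theorem degreeOf_jPlus_X_pow [CharZero R] {m n : ℕ} (h : n ≠ m) (i : σ) :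
    (jPlus m i (X i ^ n : MvPolynomial σ R)).degreeOf i = n + 1 := by
  rw [jPlus_X_pow, degreeOf_monomial_eq _ _ (sub_ne_zero.mpr (Nat.cast_injective.ne h)),
    Finsupp.single_eq_same]

end MvPolynomial

theorem Jplus_preserves_only_Rm_general {F : Type*} [Field F] [CharZero F] {N : ℕ}
    (m : ℕ) (i : Fin N) :
    (∀ f : MvPolynomial (Fin N) F, (∀ k, f.degreeOf k ≤ m) →
      ∀ k, (X i ^ 2 * pderiv i f - (m : F) • (X i * f)).degreeOf k ≤ m) ∧
    (∀ n : ℕ, n ≠ m →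
      ∃ f : MvPolynomial (Fin N) F, (∀ k, f.degreeOf k ≤ n) ∧
        ¬ (∀ k, (X i ^ 2 * pderiv i f - (m : F) • (X i * f)).degreeOf k ≤ n)) := by
  refine ⟨fun f hf k => degreeOf_jPlus_le hf i k,
    fun n hn => ⟨X i ^ n, fun k => ?_, fun h => ?_⟩⟩
  · rcases eq_or_ne k i with rfl | hk
    · rw [degreeOf_X_self_pow]
    · rw [degreeOf_X_pow_of_ne n hk]
      exact n.zero_le
  · have hdeg := h i
    rw [← jPlus, degreeOf_jPlus_X_pow hn] at hdeg
    omega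

theorem Jplus_preserves_only_Rm {F : Type*} [Field F] [CharZero F] {N : ℕ}
    (hN : 1 ≤ N) (m : ℕ) (i : Fin N) :
    (∀ f : MvPolynomial (Fin N) F, (∀ k, f.degreeOf k ≤ m) →
      ∀ k, (X i ^ 2 * pderiv i f - (m : F) • (X i * f)).degreeOf k ≤ m) ∧
    (∀ n : ℕ, n ≠ m →
      ∃ f : MvPolynomial (Fin N) F, (∀ k, f.degreeOf k ≤ n) ∧
        ¬ (∀ k, (X i ^ 2 * pderiv i f - (m : F) • (X i * f)).degreeOf k ≤ n)) :=
  Jplus_preserves_only_Rm_general m i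
end
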